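/- Let σ, σ̃: 𝒜 → ℬ⁺ be rotationally conjugate non-erasing morphisms between finite alphabets. Then, for each y ∈ ℬ^ℤ, the number of centered σ-representations of y equals the number of centered σ̃-representations of y. -/

import Mathlib

open scoped BigOperators

namespace Recog

variable {A B C : Type*}

/-- A morphism assigning a word to each letter is non-erasing if every image is nonempty. -/
def NonErasing (σ : A → List B) : Prop := ∀ a, σ a ≠ []

/-- Apply a morphism letterwise to a finite word, concatenating the images. -/
def wordApply (σ : A → List B) : List A → List B
  | [] => []
  | a :: w => σ a ++ wordApply σ w

/-- Composition of morphisms `τ ∘ σ`. -/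
def comp (τ : B → List C) (σ : A → List B) : A → List C := fun a => wordApply τ (σ a)

/-- The `ℓ`-th cutting point of the representation `(0, x)`:
`|σ(x_[0,ℓ))|` for `ℓ ≥ 0` and `-|σ(x_[ℓ,0))|` for `ℓ < 0`. -/
def cut (σ : A → List B) (x : ℤ → A) (ℓ : ℤ) : ℤ :=
  if 0 ≤ ℓ then ∑ i ∈ Finset.range ℓ.toNat, ((σ (x i)).length : ℤ)
  else -∑ i ∈ Finset.range (-ℓ).toNat, ((σ (x (-(i : ℤ) - 1))).length : ℤ)

/-- `y` is the bi-infinite image `σ(x)`, where `σ(x₀)` starts at position `0`. -/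
def IsSubstPt (σ : A → List B) (x : ℤ → A) (y : ℤ → B) : Prop :=
  ∀ (ℓ : ℤ) (j : ℕ) (hj : j < (σ (x ℓ)).length),
    y (cut σ x ℓ + j) = (σ (x ℓ)).get ⟨j, hj⟩

/-- `(k, x)` is a `σ`-representation of `y`, i.e. `y = T^k σ(x)`. -/
def IsRep (σ : A → List B) (y : ℤ → B) (k : ℤ) (x : ℤ → A) : Prop :=
  IsSubstPt σ x fun n => y (n - k)

/-- `(k, x)` is a centered `σ`-representation of `y`: `y = T^k σ(x)` with `0 ≤ k < |σ(x₀)|`. -/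
def IsCenteredRep (σ : A → List B) (y : ℤ → B) (k : ℤ) (x : ℤ → A) : Prop :=
  IsRep σ y k x ∧ 0 ≤ k ∧ k < ((σ (x 0)).length : ℤ)

/-- `y` is aperiodic: `T^p y ≠ y` for all `p ≥ 1`. -/
def Aperiodic (y : ℤ → B) : Prop := ∀ p : ℕ, 1 ≤ p → (fun n => y (n + p)) ≠ y

/-- `y` is periodic: `T^p y = y` for some `p ≥ 1`. -/
def Periodic (y : ℤ → B) : Prop := ∃ p : ℕ, 1 ≤ p ∧ (fun n => y (n + p)) = y

/-- The set of `σ`-cutting points of the representation `(k, x)`. -/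
def cutSet (σ : A → List B) (x : ℤ → A) (k : ℤ) : Set ℤ :=
  {m : ℤ | ∃ ℓ : ℤ, m = cut σ x ℓ - k}

/-- `σ` is recognizable in `X`: every `y` has at most one centered `σ`-representation in `X`. -/
def RecIn (σ : A → List B) (X : Set (ℤ → A)) : Prop :=
  ∀ (y : ℤ → B) (k k' : ℤ) (x x' : ℤ → A), x ∈ X → x' ∈ X →
    IsCenteredRep σ y k x → IsCenteredRep σ y k' x' → k = k' ∧ x = x'

/-- `σ` is recognizable in `X` for aperiodic points. -/
def RecInAp (σ : A → List B) (X : Set (ℤ → A)) : Prop :=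
  ∀ y : ℤ → B, Aperiodic y → ∀ (k k' : ℤ) (x x' : ℤ → A), x ∈ X → x' ∈ X →
    IsCenteredRep σ y k x → IsCenteredRep σ y k' x' → k = k' ∧ x = x'

/-- `σ` is left permutative: the first letters of `σ a` and `σ b` differ for distinct `a, b`. -/
def LeftPermutative (σ : A → List B) : Prop :=
  ∀ a b : A, a ≠ b → (σ a).head? ≠ (σ b).head?

/-- `σ` is right permutative: the last letters of `σ a` and `σ b` differ for distinct `a, b`. -/
def RightPermutative (σ : A → List B) : Prop :=
  ∀ a b : A, a ≠ b → (σ a).getLast? ≠ (σ b).getLast?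

/-- `σ` and `σ'` are rotationally conjugate. -/
def RotConj (σ σ' : A → List B) : Prop :=
  ∃ w : List B, (∀ a, σ a ++ w = w ++ σ' a) ∨ (∀ a, w ++ σ a = σ' a ++ w)

/-- The incidence matrix of `σ`, over `ℚ`: entry `(b, a)` counts occurrences of `b` in `σ a`. -/
noncomputable def incidence (σ : A → List B) [DecidableEq B] : Matrix B A ℚ :=
  Matrix.of fun b a => ((σ a).count b : ℚ)

/-- The finite subword `x_[i, i+m)` of a bi-infinite sequence. -/
def factor (x : ℤ → A) (i : ℤ) (m : ℕ) : List A := (List.range m).map fun j => x (i + j)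

/-- The language of a bi-infinite sequence: the set of its finite subwords. -/
def lang (x : ℤ → A) : Set (List A) := {w | ∃ (i : ℤ) (m : ℕ), w = factor x i m}

/-- `σ` is injective on bi-infinite sequences. -/
def InjZ (σ : A → List B) : Prop :=
  ∀ (x x' : ℤ → A) (y : ℤ → B), IsSubstPt σ x y → IsSubstPt σ x' y → x = x'

/-- Cutting points for one-sided sequences. -/
def cutN (σ : A → List B) (x : ℕ → A) (ℓ : ℕ) : ℕ :=
  ∑ i ∈ Finset.range ℓ, (σ (x i)).length

/-- `y` is the one-sided image `σ(x)` for `x : ℕ → A`. -/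
def IsSubstPtN (σ : A → List B) (x : ℕ → A) (y : ℕ → B) : Prop :=
  ∀ (ℓ j : ℕ) (hj : j < (σ (x ℓ)).length),
    y (cutN σ x ℓ + j) = (σ (x ℓ)).get ⟨j, hj⟩

/-- `σ` is injective on one-sided (right-infinite) sequences. -/
def InjN (σ : A → List B) : Prop :=
  ∀ (x x' : ℕ → A) (y : ℕ → B), IsSubstPtN σ x y → IsSubstPtN σ x' y → x = x'

/-- The total length `⦀σ⦀ = Σ_a |σ a|`. -/
def totalLen (σ : A → List B) [Fintype A] : ℕ := ∑ a, (σ a).length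

/-- `X` is invariant under the two-sided shift. -/
def ShiftInvariant (X : Set (ℤ → A)) : Prop :=
  ∀ x ∈ X, (fun n => x (n + 1)) ∈ X ∧ (fun n => x (n - 1)) ∈ X

/-- The iterate `σ^n` of a substitution, applied to a letter. -/
def iter (σ : A → List A) : ℕ → A → List A
  | 0, a => [a]
  | n + 1, a => wordApply (iter σ n) (σ a)

/-- The language `ℒ_σ` of a substitution: subwords of the `σ^n(a)`. -/
def subLang (σ : A → List A) : Set (List A) := {w | ∃ (n : ℕ) (a : A), w <:+: iter σ n a}

/-- The substitutive shift `X_σ`. -/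
def subX (σ : A → List A) : Set (ℤ → A) := {x | ∀ w ∈ lang x, w ∈ subLang σ}

/-- `σ` is recognizable in the sense of Mossé for `x`. -/
def MosseRec (σ : A → List B) (x : ℤ → A) : Prop :=
  ∃ ℓ : ℕ, ∀ y : ℤ → B, IsSubstPt σ x y →
    ∀ m ∈ cutSet σ x 0, ∀ m' : ℤ,
      factor y (m - ℓ) (2 * ℓ) = factor y (m' - ℓ) (2 * ℓ) → m' ∈ cutSet σ x 0

section Sadic

variable {𝒜 : ℕ → Type*}

/-- `block σ N = σ_[0,N)`, mapping a letter of `𝒜 N` to a word over `𝒜 0`. -/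
def block (σ : ∀ n, 𝒜 (n + 1) → List (𝒜 n)) : ∀ N, 𝒜 N → List (𝒜 0)
  | 0, a => [a]
  | N + 1, a => wordApply (block σ N) (σ N a)

/-- `blockFrom σ n k = σ_[n,n+k)`, mapping a letter of `𝒜 (n+k)` to a word over `𝒜 n`. -/
def blockFrom (σ : ∀ n, 𝒜 (n + 1) → List (𝒜 n)) (n k : ℕ) : 𝒜 (n + k) → List (𝒜 n) :=
  block (𝒜 := fun m => 𝒜 (n + m)) (fun m => σ (n + m)) k

/-- The language `ℒ^(n)_σ` of a directive sequence. -/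
def sadicLang (σ : ∀ n, 𝒜 (n + 1) → List (𝒜 n)) (n : ℕ) : Set (List (𝒜 n)) :=
  {w | ∃ (k : ℕ) (a : 𝒜 (n + k)), 1 ≤ k ∧ w <:+: blockFrom σ n k a}

/-- The shift `X^(n)_σ` of a directive sequence. -/
def sadicX (σ : ∀ n, 𝒜 (n + 1) → List (𝒜 n)) (n : ℕ) : Set (ℤ → 𝒜 n) :=
  {x | ∀ w ∈ lang x, w ∈ sadicLang σ n}

/-- A directive sequence is everywhere growing if `min_a |σ_[0,n)(a)| → ∞`. -/
def EverywhereGrowing (σ : ∀ n, 𝒜 (n + 1) → List (𝒜 n)) : Prop :=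
  ∀ m : ℕ, ∃ N : ℕ, ∀ n ≥ N, ∀ a : 𝒜 n, m ≤ (block σ n a).length

end Sadic

end Recog

/-!
If `σ a ++ [b] = b :: σ' a` for every letter `a`, then `σ'(x) = T σ(x)`, so the centered
`σ`-representations of `y` are exactly the centered `σ'`-representations of `T y`. On the other
hand, moving the origin of `σ(x)` one letter to the right (`repSucc`, with inverse `repPred`)
is a bijection between the centered representations of `y` and those of `T y`. A general
conjugating word is absorbed one letter at a time.
-/

namespace Recog

open Finset

variable {A B : Type*}

section Cut

variable (σ : A → List B) (x : ℤ → A)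

@[simp]
theorem cut_zero : cut σ x 0 = 0 := by
  simp [cut]

theorem cut_natCast (n : ℕ) : cut σ x n = ∑ i ∈ range n, ((σ (x i)).length : ℤ) := by
  simp [cut]

theorem cut_neg_natCast (n : ℕ) :
    cut σ x (-n) = -∑ i ∈ range n, ((σ (x (-i - 1))).length : ℤ) := by
  rcases n with _ | n
  · simp
  · rw [cut, if_neg (by omega), neg_neg, Int.toNat_natCast]

theorem cut_succ (ℓ : ℤ) : cut σ x (ℓ + 1) = cut σ x ℓ + (σ (x ℓ)).length := by
  obtain ⟨n, rfl | rfl⟩ := Int.eq_nat_or_neg ℓ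
  · rw [← Nat.cast_succ, cut_natCast, cut_natCast, sum_range_succ]
  · rcases n with _ | n
    · rw [Nat.cast_zero, neg_zero, zero_add, ← Nat.cast_one, cut_natCast]
      simp
    · rw [show -((n + 1 : ℕ) : ℤ) + 1 = -n by push_cast; ring, cut_neg_natCast,
        cut_neg_natCast, sum_range_succ]
      push_cast
      ring_nf

theorem cut_eq_of_succ {f : ℤ → ℤ} (h0 : f 0 = 0)
    (hsucc : ∀ ℓ, f (ℓ + 1) = f ℓ + (σ (x ℓ)).length) : cut σ x = f := by
  funext ℓ
  induction ℓ using Int.induction_on with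
  | zero => rw [cut_zero, h0]
  | succ i ih => rw [cut_succ, hsucc, ih]
  | pred i ih =>
    have hc := cut_succ σ x (-i - 1)
    have hf := hsucc (-i - 1)
    rw [sub_add_cancel] at hc hf
    linarith

theorem cut_shift :
    cut σ (fun n => x (n + 1)) = fun ℓ => cut σ x (ℓ + 1) - (σ (x 0)).length :=
  cut_eq_of_succ _ _ (by simp only [cut_succ, cut_zero]; ring) fun ℓ => by
    simp only [cut_succ]
    ring

end Cut

theorem cut_congr {σ σ' : A → List B} (hlen : ∀ a, (σ a).length = (σ' a).length)
    (x : ℤ → A) : cut σ x = cut σ' x :=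
  cut_eq_of_succ _ _ (cut_zero _ _) fun ℓ => by rw [cut_succ, hlen]

theorem isSubstPt_shift_iff {σ : A → List B} {x : ℤ → A} {u : ℤ → B} :
    IsSubstPt σ (fun n => x (n + 1)) (fun n => u (n + (σ (x 0)).length)) ↔
      IsSubstPt σ x u := by
  simp only [IsSubstPt, cut_shift, sub_add_eq_add_sub, add_sub_cancel_right]
  constructor
  · intro h ℓ
    obtain ⟨m, rfl⟩ : ∃ m, ℓ = m + 1 := ⟨ℓ - 1, by ring⟩
    exact h m
  · exact fun h ℓ => h (ℓ + 1)

theorem isRep_shift_iff {σ : A → List B} {y : ℤ → B} {k : ℤ} {x : ℤ → A} :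
    IsRep σ y (k - (σ (x 0)).length) (fun n => x (n + 1)) ↔ IsRep σ y k x := by
  rw [IsRep, IsRep, ← isSubstPt_shift_iff (x := x)]
  simp only [sub_sub_eq_add_sub]

theorem isRep_unshift_iff {σ : A → List B} {y : ℤ → B} {k : ℤ} {x : ℤ → A} :
    IsRep σ y (k + (σ (x (-1))).length) (fun n => x (n - 1)) ↔ IsRep σ y k x := by
  simpa using (isRep_shift_iff (σ := σ) (y := y) (k := k + (σ (x (-1))).length)
    (x := fun n => x (n - 1))).symm

theorem isRep_translate_iff {σ : A → List B} {y : ℤ → B} {k : ℤ} {x : ℤ → A} :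
    IsRep σ (fun n => y (n + 1)) k x ↔ IsRep σ y (k - 1) x := by
  simp only [IsRep, sub_sub_eq_add_sub, sub_add_eq_add_sub]

def repSucc (σ : A → List B) (p : ℤ × (ℤ → A)) : ℤ × (ℤ → A) :=
  if p.1 + 1 = (σ (p.2 0)).length then (0, fun n => p.2 (n + 1)) else (p.1 + 1, p.2)

def repPred (σ : A → List B) (p : ℤ × (ℤ → A)) : ℤ × (ℤ → A) :=
  if p.1 = 0 then ((σ (p.2 (-1))).length - 1, fun n => p.2 (n - 1)) else (p.1 - 1, p.2)

section Recenter

variable {σ : A → List B} {y : ℤ → B}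

theorem isCenteredRep_repSucc (hσ : NonErasing σ) {p : ℤ × (ℤ → A)}
    (hp : IsCenteredRep σ y p.1 p.2) :
    IsCenteredRep σ (fun n => y (n + 1)) (repSucc σ p).1 (repSucc σ p).2 := by
  obtain ⟨k, x⟩ := p
  obtain ⟨hrep, hk0, hk⟩ := hp
  dsimp only [repSucc] at hrep hk0 hk ⊢
  split_ifs with hlast <;> dsimp only
  · refine ⟨?_, le_rfl, Int.natCast_pos.2 (List.length_pos_iff.2 (hσ _))⟩
    rw [isRep_translate_iff, show (0 : ℤ) - 1 = k - (σ (x 0)).length by omega]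
    exact isRep_shift_iff.2 hrep
  · exact ⟨by rwa [isRep_translate_iff, add_sub_cancel_right], by omega, by omega⟩

theorem isCenteredRep_repPred (hσ : NonErasing σ) {p : ℤ × (ℤ → A)}
    (hp : IsCenteredRep σ (fun n => y (n + 1)) p.1 p.2) :
    IsCenteredRep σ y (repPred σ p).1 (repPred σ p).2 := by
  obtain ⟨k, x⟩ := p
  obtain ⟨hrep, hk0, hk⟩ := hp
  dsimp only [repPred] at hrep hk0 hk ⊢
  rw [isRep_translate_iff] at hrep
  split_ifs with hfirst <;> dsimp only
  · subst hfirst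
    have hpos : 0 < (σ (x (-1))).length := List.length_pos_iff.2 (hσ _)
    refine ⟨?_, by omega, by simp⟩
    convert isRep_unshift_iff.2 hrep using 2
    ring
  · exact ⟨hrep, by omega, by omega⟩

theorem repPred_repSucc {p : ℤ × (ℤ → A)} (hp : 0 ≤ p.1) :
    repPred σ (repSucc σ p) = p := by
  obtain ⟨k, x⟩ := p
  dsimp only [repSucc] at hp ⊢
  split_ifs with hlast
  · simp [repPred, ← hlast]
  · simp [repPred, show k + 1 ≠ 0 by omega]

theorem repSucc_repPred {p : ℤ × (ℤ → A)} (hp : p.1 < (σ (p.2 0)).length) :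
    repSucc σ (repPred σ p) = p := by
  obtain ⟨k, x⟩ := p
  dsimp only [repPred] at hp ⊢
  split_ifs with hfirst
  · simp [repSucc, hfirst]
  · simp [repSucc, show k ≠ (σ (x 0)).length by omega]

def centeredRepShiftEquiv (hσ : NonErasing σ) (y : ℤ → B) :
    {p : ℤ × (ℤ → A) // IsCenteredRep σ y p.1 p.2} ≃
      {p : ℤ × (ℤ → A) // IsCenteredRep σ (fun n => y (n + 1)) p.1 p.2} where
  toFun p := ⟨repSucc σ p, isCenteredRep_repSucc hσ p.2⟩
  invFun p := ⟨repPred σ p, isCenteredRep_repPred hσ p.2⟩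
  left_inv p := Subtype.ext (repPred_repSucc p.2.2.1)
  right_inv p := Subtype.ext (repSucc_repPred p.2.2.2)

end Recenter

theorem IsSubstPt.eq_getElem_append {σ : A → List B} {x : ℤ → A} {u : ℤ → B}
    (hu : IsSubstPt σ x u) (ℓ : ℤ) (j : ℕ)
    (hj : j < (σ (x ℓ) ++ σ (x (ℓ + 1))).length) :
    u (cut σ x ℓ + j) = (σ (x ℓ) ++ σ (x (ℓ + 1)))[j] := by
  rw [List.getElem_append]
  split_ifs with hlt
  · exact hu ℓ j hlt
  · have hj' : j - (σ (x ℓ)).length < (σ (x (ℓ + 1))).length := by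
      simp only [List.length_append] at hj
      omega
    refine (congrArg u ?_).trans (hu (ℓ + 1) _ hj')
    rw [cut_succ]
    omega

theorem IsSubstPt.eq_getElem_of_append_eq {σ : A → List B} {x : ℤ → A} {u : ℤ → B}
    (hu : IsSubstPt σ x u) {ℓ : ℤ} {p w s : List B}
    (he : σ (x ℓ) ++ σ (x (ℓ + 1)) = p ++ w ++ s) (j : ℕ) (hj : j < w.length) :
    u (cut σ x ℓ + p.length + j) = w[j] := by
  have hlt : p.length + j < (σ (x ℓ) ++ σ (x (ℓ + 1))).length := by
    rw [he]
    simp only [List.length_append]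
    omega
  rw [add_assoc, ← Nat.cast_add, hu.eq_getElem_append ℓ _ hlt, List.getElem_of_eq he,
    List.getElem_append_left (by simp; omega), List.getElem_append_right (by omega)]
  simp

theorem exists_eq_cons_of_append_singleton {u v : List B} {b : B} (hu : u ≠ [])
    (h : u ++ [b] = b :: v) : ∃ t, u = b :: t ∧ v = t ++ [b] := by
  obtain ⟨c, t, rfl⟩ := List.exists_cons_of_ne_nil hu
  simp only [List.cons_append, List.cons.injEq] at h
  exact ⟨t, by rw [h.1], h.2.symm⟩

section SingleLetter

variable {σ σ' : A → List B} {b : B}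

theorem length_eq_of_append_singleton (h : ∀ a, σ a ++ [b] = b :: σ' a) (a : A) :
    (σ a).length = (σ' a).length := by
  simpa using congrArg List.length (h a)

theorem isSubstPt_iff_of_append_singleton (h : ∀ a, σ a ++ [b] = b :: σ' a)
    (hσ : NonErasing σ) {x : ℤ → A} {u : ℤ → B} :
    IsSubstPt σ' x (fun n => u (n + 1)) ↔ IsSubstPt σ x u := by
  have hcut := cut_congr (length_eq_of_append_singleton h) x
  have hform a := exists_eq_cons_of_append_singleton (hσ a) (h a)
  constructor
  · intro hv ℓ j hj
    obtain ⟨m, rfl⟩ : ∃ m, ℓ = m + 1 := ⟨ℓ - 1, by ring⟩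
    obtain ⟨t, -, ht⟩ := hform (x m)
    obtain ⟨s, hs, hs'⟩ := hform (x (m + 1))
    have he : σ' (x m) ++ σ' (x (m + 1)) = t ++ σ (x (m + 1)) ++ [b] := by simp [ht, hs, hs']
    refine Eq.trans (congrArg u ?_) (hv.eq_getElem_of_append_eq he j hj)
    rw [hcut, cut_succ, ht, List.length_append, List.length_singleton]
    push_cast
    ring
  · intro hu ℓ j hj
    obtain ⟨t, ht, ht'⟩ := hform (x ℓ)
    obtain ⟨s, hs, -⟩ := hform (x (ℓ + 1))
    have he : σ (x ℓ) ++ σ (x (ℓ + 1)) = [b] ++ σ' (x ℓ) ++ s := by simp [ht, ht', hs]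
    refine Eq.trans (congrArg u ?_) (hu.eq_getElem_of_append_eq he j hj)
    rw [hcut, List.length_singleton]
    push_cast
    ring

theorem isCenteredRep_iff_of_append_singleton (h : ∀ a, σ a ++ [b] = b :: σ' a)
    (hσ : NonErasing σ) {y : ℤ → B} {k : ℤ} {x : ℤ → A} :
    IsCenteredRep σ' (fun n => y (n + 1)) k x ↔ IsCenteredRep σ y k x := by
  simp only [IsCenteredRep, IsRep, sub_add_eq_add_sub, length_eq_of_append_singleton h,
    isSubstPt_iff_of_append_singleton h hσ (u := fun n => y (n - k))]

theorem mk_centeredRep_eq_of_append_singleton (h : ∀ a, σ a ++ [b] = b :: σ' a)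
    (hσ : NonErasing σ) (y : ℤ → B) :
    Cardinal.mk {p : ℤ × (ℤ → A) // IsCenteredRep σ y p.1 p.2} =
      Cardinal.mk {p : ℤ × (ℤ → A) // IsCenteredRep σ' y p.1 p.2} := by
  have hσ' : NonErasing σ' := fun a ha => hσ a (by simpa [ha] using h a)
  calc Cardinal.mk {p : ℤ × (ℤ → A) // IsCenteredRep σ y p.1 p.2}
      = Cardinal.mk {p : ℤ × (ℤ → A) // IsCenteredRep σ' (fun n => y (n + 1)) p.1 p.2} :=
        Cardinal.mk_congr <| Equiv.subtypeEquivRight fun _ =>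
          (isCenteredRep_iff_of_append_singleton h hσ).symm
    _ = Cardinal.mk {p : ℤ × (ℤ → A) // IsCenteredRep σ' y p.1 p.2} :=
        (Cardinal.mk_congr (centeredRepShiftEquiv hσ' y)).symm

end SingleLetter

theorem mk_centeredRep_eq_of_append_eq {σ σ' : A → List B} {w : List B}
    (hσ : NonErasing σ) (h : ∀ a, σ a ++ w = w ++ σ' a) (y : ℤ → B) :
    Cardinal.mk {p : ℤ × (ℤ → A) // IsCenteredRep σ y p.1 p.2} =
      Cardinal.mk {p : ℤ × (ℤ → A) // IsCenteredRep σ' y p.1 p.2} := by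
  induction w generalizing σ with
  | nil =>
    obtain rfl : σ = σ' := funext fun a => by simpa using h a
    rfl
  | cons b t ih =>
    -- rotate the first letter `b` of each `σ a` to its end, leaving the conjugator `t`
    have hstep a : σ a ++ [b] = b :: ((σ a).tail ++ [b]) ∧
        (σ a).tail ++ [b] ++ t = t ++ σ' a := by
      obtain ⟨c, r, hcr⟩ := List.exists_cons_of_ne_nil (hσ a)
      have ha := h a
      simp only [hcr, List.cons_append, List.cons.injEq] at ha ⊢
      obtain ⟨rfl, ha⟩ := ha
      simpa using ha
    exact (mk_centeredRep_eq_of_append_singleton (fun a => (hstep a).1) hσ y).trans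
      (ih (fun a => by simp) (fun a => (hstep a).2))

end Recog

open Recog in
theorem stmt12_general {A B : Type*}
    (σ σ' : A → List B) (hσ : NonErasing σ) (hσ' : NonErasing σ')
    (hconj : RotConj σ σ') (y : ℤ → B) :
    Cardinal.mk {p : ℤ × (ℤ → A) // IsCenteredRep σ y p.1 p.2} =
      Cardinal.mk {p : ℤ × (ℤ → A) // IsCenteredRep σ' y p.1 p.2} := by
  obtain ⟨w, h | h⟩ := hconj
  · exact mk_centeredRep_eq_of_append_eq hσ h y
  · exact (mk_centeredRep_eq_of_append_eq hσ' (fun a => (h a).symm) y).symm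

open Recog in
/-- Rotationally conjugate morphisms give each `y` equally many centered
representations. -/
theorem stmt12 {A B : Type*} [Fintype A] [Fintype B]
    (σ σ' : A → List B) (hσ : NonErasing σ) (hσ' : NonErasing σ')
    (hconj : RotConj σ σ') (y : ℤ → B) :
    Cardinal.mk {p : ℤ × (ℤ → A) // IsCenteredRep σ y p.1 p.2} =
      Cardinal.mk {p : ℤ × (ℤ → A) // IsCenteredRep σ' y p.1 p.2} :=
  stmt12_general σ σ' hσ hσ' hconj y
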